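/- arXiv:2007.03088 — 3 statements merged into one kernel-verified Lean document; each statement's English description precedes it below -/
import Mathlib

section
/- For every positive integer n, ν_2(σ(n)) ≤ ⌈log_2 n⌉. -/
/-!
For a prime power, the 2-part of `σ(p ^ k)` is at most `p ^ k`, except when `k = 1` and
`p = 2 ^ a - 1` is a Mersenne prime, where `σ p = 2 ^ a`. For odd `p` and odd `k` this comes from
the lifting-the-exponent formula `ν₂(σ(p ^ k)) + 1 = ν₂(p + 1) + ν₂(k + 1)`. By multiplicativity,
`2 ^ ν₂(σ n) * ∏ (1 - 2⁻ᵃ) ≤ n`, the product running over the Mersenne primes `2 ^ a - 1` dividing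
`n`. Since `(1 - 2⁻ᵃ)² ≥ 1 - 2¹⁻ᵃ`, a product of factors `1 - 2⁻ᵃ` over distinct `a ≥ 2` telescopes
to more than `1 / 2`, so `2 ^ ν₂(σ n) < 2 n`.
-/

open Finset ArithmeticFunction
open scoped ArithmeticFunction.sigma

theorem Nat.odd_geom_sum_succ {x n : ℕ} (h : Even x ∨ Even n) :
    Odd (∑ i ∈ range (n + 1), x ^ i) := by
  rw [odd_sum_iff_odd_card_odd]
  rcases x.even_or_odd with hx | hx
  · have : {i ∈ range (n + 1) | Odd (x ^ i)} = {0} := by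
      ext i
      simp only [mem_filter, mem_range, mem_singleton, ← Nat.not_even_iff_odd, Nat.even_pow, hx,
        true_and, not_not]
      omega
    simp [this]
  · rw [filter_true_of_mem fun i _ => hx.pow, card_range, Nat.odd_add_one, Nat.not_odd_iff_even]
    exact h.resolve_left (Nat.not_even_iff_odd.mpr hx)

theorem padicValNat_two_geom_sum_add_one {x n : ℕ} (hx : Odd x) (h1x : 1 < x) (hn : n ≠ 0)
    (hneven : Even n) :
    padicValNat 2 (∑ i ∈ range n, x ^ i) + 1 = padicValNat 2 (x + 1) + padicValNat 2 n := by
  have hsum : (∑ i ∈ range n, x ^ i) * (x - 1) = x ^ n - 1 := geom_sum_mul_of_one_le h1x.le n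
  have hpos : (∑ i ∈ range n, x ^ i) ≠ 0 := (sum_pos (fun i _ => by positivity)
    (nonempty_range_iff.mpr hn)).ne'
  have := padicValNat.pow_two_sub_one h1x hx.not_two_dvd_nat hn hneven
  rw [← hsum, padicValNat.mul hpos (by omega)] at this
  omega

theorem Nat.succ_mul_succ_le_two_mul_pow {p k : ℕ} (hp : 3 ≤ p) (hk : 2 ≤ k) :
    (p + 1) * (k + 1) ≤ 2 * p ^ k := by
  induction k, hk using Nat.le_induction with
  | base => nlinarith
  | succ k hk ih =>
    have : 1 ≤ p ^ k := Nat.one_le_pow _ _ (by omega)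
    rw [pow_succ]
    nlinarith

theorem two_pow_padicValNat_sigma_prime_pow_le {p k : ℕ} (hp : p.Prime) :
    2 ^ padicValNat 2 (σ 1 (p ^ k)) ≤ p ^ k ∨ (k = 1 ∧ ∃ a, p + 1 = 2 ^ a) := by
  rw [sigma_one_apply_prime_pow hp]
  by_cases hparity : Even p ∨ Even k
  · left
    rw [padicValNat.eq_zero_of_not_dvd (Nat.odd_geom_sum_succ hparity).not_two_dvd_nat, pow_zero]
    exact Nat.one_le_pow _ _ hp.pos
  obtain ⟨hp_odd, hk_odd⟩ : Odd p ∧ Odd k := by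
    simpa only [not_or, Nat.not_even_iff_odd] using hparity
  set ν := padicValNat 2 (∑ i ∈ range (k + 1), p ^ i)
  have hν : ν + 1 = padicValNat 2 (p + 1) + padicValNat 2 (k + 1) :=
    padicValNat_two_geom_sum_add_one hp_odd hp.one_lt k.succ_ne_zero hk_odd.add_one
  have hbound : 2 * 2 ^ ν ≤ (p + 1) * (k + 1) := by
    rw [← pow_succ', hν, pow_add]
    exact Nat.mul_le_mul (Nat.le_of_dvd (by omega) pow_padicValNat_dvd)
      (Nat.le_of_dvd (by omega) pow_padicValNat_dvd)
  obtain rfl | hk3 : k = 1 ∨ 3 ≤ k := by obtain ⟨j, rfl⟩ := hk_odd; omega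
  · by_cases hmersenne : ∃ a, p + 1 = 2 ^ a
    · exact Or.inr ⟨rfl, hmersenne⟩
    · have hne : 2 ^ ν ≠ p + 1 := fun h => hmersenne ⟨ν, h.symm⟩
      left
      rw [pow_one]
      omega
  · left
    have hp3 : 3 ≤ p := by have := hp.two_le; obtain ⟨j, rfl⟩ := hp_odd; omega
    have := Nat.succ_mul_succ_le_two_mul_pow hp3 (by omega : 2 ≤ k)
    omega

open Classical in
noncomputable def mersenneWeight (p : ℕ) : ℝ :=
  if ∃ a, p + 1 = 2 ^ a then 1 - ((p : ℝ) + 1)⁻¹ else 1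

theorem mersenneWeight_of_eq_two_pow {p a : ℕ} (h : p + 1 = 2 ^ a) :
    mersenneWeight p = 1 - ((2 : ℝ) ^ a)⁻¹ := by
  rw [mersenneWeight, if_pos ⟨a, h⟩]
  exact_mod_cast congrArg (fun m : ℕ => 1 - ((m : ℝ))⁻¹) h

theorem mersenneWeight_of_forall_ne {p : ℕ} (h : ∀ a, p + 1 ≠ 2 ^ a) : mersenneWeight p = 1 := by
  rw [mersenneWeight, if_neg (not_exists.mpr h)]

theorem mersenneWeight_nonneg (p : ℕ) : 0 ≤ mersenneWeight p := by
  unfold mersenneWeight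
  split_ifs
  · rw [sub_nonneg]
    exact inv_le_one_of_one_le₀ (by linarith [p.cast_nonneg (α := ℝ)])
  · exact zero_le_one

theorem mersenneWeight_le_one (p : ℕ) : mersenneWeight p ≤ 1 := by
  unfold mersenneWeight
  split_ifs
  · linarith [inv_nonneg.mpr (by positivity : (0 : ℝ) ≤ p + 1)]
  · exact le_rfl

theorem two_pow_padicValNat_sigma_prime_pow_mul_mersenneWeight_le {p : ℕ} (hp : p.Prime)
    (k : ℕ) : (2 : ℝ) ^ padicValNat 2 (σ 1 (p ^ k)) * mersenneWeight p ≤ (p : ℝ) ^ k := by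
  rcases two_pow_padicValNat_sigma_prime_pow_le (k := k) hp with h | ⟨rfl, a, ha⟩
  · calc (2 : ℝ) ^ padicValNat 2 (σ 1 (p ^ k)) * mersenneWeight p
        ≤ (2 : ℝ) ^ padicValNat 2 (σ 1 (p ^ k)) * 1 :=
          mul_le_mul_of_nonneg_left (mersenneWeight_le_one p) (by positivity)
      _ ≤ (p : ℝ) ^ k := by rw [mul_one]; exact_mod_cast h
  · have hσ : σ 1 (p ^ 1) = 2 ^ a := by
      rw [sigma_one_apply_prime_pow hp, sum_range_succ, sum_range_one, ← ha]
      ring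
    have hpa : (p : ℝ) = 2 ^ a - 1 := by
      rw [eq_sub_iff_add_eq]
      exact_mod_cast ha
    rw [hσ, padicValNat.prime_pow, mersenneWeight_of_eq_two_pow ha, hpa, pow_one, mul_sub, mul_one,
      mul_inv_cancel₀ (by positivity)]

theorem two_pow_padicValNat_sigma_mul_prod_mersenneWeight_le {n : ℕ} (hn : n ≠ 0) :
    (2 : ℝ) ^ padicValNat 2 (σ 1 n) * ∏ p ∈ n.primeFactors, mersenneWeight p ≤ n := by
  induction n using Nat.recOnPosPrimePosCoprime with
  | prime_pow p k hp hk =>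
    rw [Nat.primeFactors_prime_pow hk.ne' hp, prod_singleton, Nat.cast_pow]
    exact two_pow_padicValNat_sigma_prime_pow_mul_mersenneWeight_le hp k
  | zero => exact absurd rfl hn
  | one => simp
  | coprime a b ha hb hab iha ihb =>
    have hprod_nonneg (m : ℕ) : 0 ≤ ∏ p ∈ m.primeFactors, mersenneWeight p :=
      prod_nonneg fun p _ => mersenneWeight_nonneg p
    rw [isMultiplicative_sigma.map_mul_of_coprime hab,
      padicValNat.mul (sigma_pos 1 a (by omega)).ne' (sigma_pos 1 b (by omega)).ne', pow_add,
      hab.primeFactors_mul, prod_union hab.disjoint_primeFactors, Nat.cast_mul, mul_mul_mul_comm]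
    exact mul_le_mul (iha (by omega)) (ihb (by omega))
      (mul_nonneg (by positivity) (hprod_nonneg b)) (by positivity)

theorem one_sub_inv_two_pow_lt_prod_mersenneWeight (P : Finset ℕ) (b : ℕ)
    (hP : ∀ p ∈ P, 2 ^ b ≤ p) : 1 - ((2 : ℝ) ^ b)⁻¹ < ∏ p ∈ P, mersenneWeight p := by
  induction P using Finset.induction_on_min generalizing b with
  | empty =>
    rw [prod_empty, sub_lt_self_iff]
    positivity
  | insert q T hqT ih =>
    have hq : 2 ^ b ≤ q := hP q (mem_insert_self q T)
    rw [prod_insert fun h => (hqT q h).false]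
    by_cases hmersenne : ∃ a, q + 1 = 2 ^ a
    · obtain ⟨a, ha⟩ := hmersenne
      have hba : b + 1 ≤ a := (Nat.pow_lt_pow_iff_right one_lt_two).mp (by omega)
      have hT := ih a fun p hp => by have := hqT p hp; omega
      rw [mersenneWeight_of_eq_two_pow ha]
      have h2t : 2 * ((2 : ℝ) ^ a)⁻¹ ≤ ((2 : ℝ) ^ b)⁻¹ :=
        calc 2 * ((2 : ℝ) ^ a)⁻¹ ≤ 2 * ((2 : ℝ) ^ (b + 1))⁻¹ := by gcongr; norm_num
          _ = ((2 : ℝ) ^ b)⁻¹ := by rw [pow_succ', mul_inv, mul_inv_cancel_left₀ two_ne_zero]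
      have ht : ((2 : ℝ) ^ a)⁻¹ < 1 := inv_lt_one_of_one_lt₀ (one_lt_pow₀ one_lt_two (by omega))
      calc 1 - ((2 : ℝ) ^ b)⁻¹ ≤ (1 - ((2 : ℝ) ^ a)⁻¹) * (1 - ((2 : ℝ) ^ a)⁻¹) := by
            nlinarith [sq_nonneg ((2 : ℝ) ^ a)⁻¹]
        _ < (1 - ((2 : ℝ) ^ a)⁻¹) * ∏ p ∈ T, mersenneWeight p :=
          mul_lt_mul_of_pos_left hT (by linarith)
    · rw [mersenneWeight_of_forall_ne (not_exists.mp hmersenne), one_mul]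
      exact ih b fun p hp => hP p (mem_insert_of_mem hp)

theorem two_pow_padicValNat_sigma_lt {n : ℕ} (hn : n ≠ 0) :
    2 ^ padicValNat 2 (σ 1 n) < 2 * n := by
  have hle := two_pow_padicValNat_sigma_mul_prod_mersenneWeight_le hn
  have hhalf := one_sub_inv_two_pow_lt_prod_mersenneWeight n.primeFactors 1
    fun p hp => by rw [pow_one]; exact (Nat.prime_of_mem_primeFactors hp).two_le
  have hpos : (0 : ℝ) < 2 ^ padicValNat 2 (σ 1 n) := by positivity
  exact_mod_cast (show (2 : ℝ) ^ padicValNat 2 (σ 1 n) < 2 * n by nlinarith)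

theorem val2_sigma_le (n : ℕ) (hn : 0 < n) :
    padicValNat 2 (∑ d ∈ n.divisors, d) ≤ Nat.clog 2 n := by
  rw [← sigma_one_apply]
  have hclog : 2 * n ≤ 2 ^ (Nat.clog 2 n + 1) := by
    rw [pow_succ']
    exact Nat.mul_le_mul_left 2 (Nat.le_pow_clog one_lt_two n)
  exact Nat.lt_succ_iff.mp <| (Nat.pow_lt_pow_iff_right one_lt_two).mp <|
    (two_pow_padicValNat_sigma_lt hn.ne').trans_le hclog
end

section
/- For a positive integer n, equality ν_2(σ(n)) = ⌈log_2 n⌉ holds with n > 1 if and only if n is a product of distinct Mersenne primes (primes of the form 2^t - 1). -/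
/-!
Write σ(n) = ∏ σ(p ^ e) over the prime powers exactly dividing n. A Mersenne prime
p = 2 ^ t - 1 with exponent 1 contributes σ(p) = p + 1 = 2 ^ t. Every other prime power has
2 · 2 ^ ν₂(σ(p ^ e)) ≤ p ^ e: σ(p ^ e) is odd unless p and e are both odd, and then
lifting the exponent gives
2 · 2 ^ ν₂(σ(p ^ e)) = 2 ^ ν₂(p + 1) · 2 ^ ν₂(e + 1) ≤ (p + 1)(e + 1).
For distinct Mersenne primes, ∏ (p + 1) < 2 ∏ p, because
∏ (1 - 2 ^ (-t)) ≥ 1 - ∑ 2 ^ (-t) > 1/2 for distinct exponents t ≥ 2.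
So 2 ^ ν₂(σ(n)) lies in [n, 2n) when n is a product of distinct Mersenne primes and is
smaller than n otherwise; the first case is exactly ν₂(σ(n)) = ⌈log₂ n⌉.
-/

open Finset ArithmeticFunction
open scoped ArithmeticFunction.sigma

def IsMersennePrime (p : ℕ) : Prop := p.Prime ∧ ∃ t, p + 1 = 2 ^ t

namespace IsMersennePrime

variable {p : ℕ} (hp : IsMersennePrime p)
include hp

theorem add_one_eq_two_pow_log : p + 1 = 2 ^ Nat.log 2 (p + 1) := by
  obtain ⟨-, t, ht⟩ := hp
  rw [ht, Nat.log_pow one_lt_two]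

theorem two_le_log : 2 ≤ Nat.log 2 (p + 1) := by
  obtain ⟨hp, t, ht⟩ := hp
  have := hp.two_le
  rw [ht, Nat.log_pow one_lt_two]
  by_contra! h
  interval_cases t <;> omega

end IsMersennePrime

theorem padicValNat_finset_prod {ι : Type*} {p : ℕ} [Fact p.Prime] {s : Finset ι}
    {f : ι → ℕ} (hf : ∀ i ∈ s, f i ≠ 0) :
    padicValNat p (∏ i ∈ s, f i) = ∑ i ∈ s, padicValNat p (f i) := by
  rw [← Nat.factorization_def _ Fact.out, Nat.factorization_prod hf, Finsupp.finsetSum_apply]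
  exact sum_congr rfl fun i _ => Nat.factorization_def _ Fact.out

theorem three_mul_two_pow_padicValNat_le {m : ℕ} (hm : m ≠ 0) (h : ∀ t, m ≠ 2 ^ t) :
    3 * 2 ^ padicValNat 2 m ≤ m := by
  obtain ⟨k, c, hc, rfl⟩ := Nat.exists_eq_two_pow_mul_odd hm
  rw [padicValNat.mul (by positivity) (by rintro rfl; simp at hc), padicValNat.prime_pow,
    padicValNat.eq_zero_of_not_dvd (Nat.not_even_iff_odd.mpr hc ∘ even_iff_two_dvd.mpr),
    add_zero, mul_comm]
  obtain ⟨j, rfl⟩ := hc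
  rcases j with _ | j
  · exact absurd (mul_one _) (h k)
  · exact Nat.mul_le_mul_left _ (by omega)

theorem Nat.clog_eq_of_le_pow_of_pow_lt_mul {b n k : ℕ} (hb : 1 < b) (h₁ : n ≤ b ^ k)
    (h₂ : b ^ k < b * n) : Nat.clog b n = k := by
  refine le_antisymm (clog_le_of_le_pow h₁) (Nat.le_of_not_lt fun h => ?_)
  have hn : n ≤ b ^ (k - 1) := (clog_le_iff_le_pow hb).mp (by omega)
  have hk : b ^ k = b * b ^ (k - 1) := by rw [← pow_succ']; congr 1; omega
  have := Nat.mul_le_mul_left b hn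
  omega

theorem two_mul_prod_le_prod {ι : Type*} {s : Finset ι} {f g : ι → ℕ} (hs : s.Nonempty)
    (h : ∀ i ∈ s, 2 * f i ≤ g i) : 2 * ∏ i ∈ s, f i ≤ ∏ i ∈ s, g i := by
  classical
  obtain ⟨i, hi⟩ := hs
  rw [← mul_prod_erase s f hi, ← mul_prod_erase s g hi, ← mul_assoc]
  exact Nat.mul_le_mul (h i hi)
    (prod_le_prod' fun j hj => by have := h j (mem_of_mem_erase hj); omega)

theorem add_one_mul_add_one_le_pow {p e : ℕ} (hp : 3 ≤ p) (he : 3 ≤ e) :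
    (p + 1) * (e + 1) ≤ p ^ e := by
  induction e, he using Nat.le_induction with
  | base => nlinarith [Nat.mul_le_mul hp hp]
  | succ e he ih => rw [pow_succ]; nlinarith [Nat.mul_le_mul_left (p ^ e) hp]

theorem odd_sum_range_pow {p e : ℕ} (h : Even p ∨ Even e) :
    Odd (∑ k ∈ range (e + 1), p ^ k) := by
  rcases Nat.even_or_odd p with hp | hp
  · rw [sum_range_succ', pow_zero]
    exact (even_sum _ fun k _ => hp.pow_of_ne_zero k.succ_ne_zero).add_one
  · have he : Even e := h.resolve_left (Nat.not_even_iff_odd.mpr hp)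
    rw [odd_sum_iff_odd_card_odd, filter_true_of_mem fun k _ => hp.pow, card_range]
    exact he.add_one

theorem padicValNat_two_sum_range_pow_add_one {p e : ℕ} (hp1 : 1 < p) (hp : Odd p)
    (he : Odd e) :
    padicValNat 2 (∑ k ∈ range (e + 1), p ^ k) + 1 =
      padicValNat 2 (p + 1) + padicValNat 2 (e + 1) := by
  have hgeom : (∑ k ∈ range (e + 1), p ^ k) * (p - 1) = p ^ (e + 1) - 1 := by
    have := geom_sum_mul_add (p - 1) (e + 1)
    rw [Nat.sub_add_cancel hp1.le] at this
    omega
  have hsum : ∑ k ∈ range (e + 1), p ^ k ≠ 0 :=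
    (sum_pos (fun k _ => by positivity) nonempty_range_add_one).ne'
  have hlte := padicValNat.pow_two_sub_one (n := e + 1) hp1
    (Nat.not_even_iff_odd.mpr hp ∘ even_iff_two_dvd.mpr) e.succ_ne_zero he.add_one
  rw [← hgeom, padicValNat.mul hsum (by omega)] at hlte
  omega

theorem sigma_one_prime {p : ℕ} (hp : p.Prime) : σ 1 p = p + 1 := by
  simpa [sum_range_succ, add_comm] using sigma_one_apply_prime_pow (i := 1) hp

theorem two_mul_two_pow_padicValNat_sigma_one_prime_pow_le {p e : ℕ} (hp : p.Prime)
    (he : e ≠ 0) (h : ¬(e = 1 ∧ IsMersennePrime p)) :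
    2 * 2 ^ padicValNat 2 (σ 1 (p ^ e)) ≤ p ^ e := by
  rcases eq_or_ne e 1 with rfl | he1
  · have hsucc : ∀ t, p + 1 ≠ 2 ^ t := fun t ht => h ⟨rfl, hp, t, ht⟩
    have := three_mul_two_pow_padicValNat_le (m := p + 1) (by omega) hsucc
    rw [pow_one, sigma_one_prime hp]
    omega
  rw [sigma_one_apply_prime_pow hp]
  by_cases hpar : Even p ∨ Even e
  · rw [padicValNat.eq_zero_of_not_dvd
      (Nat.not_even_iff_odd.mpr (odd_sum_range_pow hpar) ∘ even_iff_two_dvd.mpr)]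
    have := hp.two_le
    have := Nat.le_self_pow he p
    omega
  rw [not_or, Nat.not_even_iff_odd, Nat.not_even_iff_odd] at hpar
  have hp3 : 3 ≤ p := by have := hp.two_le; have := hpar.1; grind
  have he3 : 3 ≤ e := by have := hpar.2; grind
  have h1 : 2 ^ padicValNat 2 (p + 1) ≤ p + 1 := Nat.le_of_dvd (by omega) pow_padicValNat_dvd
  have h2 : 2 ^ padicValNat 2 (e + 1) ≤ e + 1 := Nat.le_of_dvd (by omega) pow_padicValNat_dvd
  calc 2 * 2 ^ padicValNat 2 (∑ k ∈ range (e + 1), p ^ k)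
      = 2 ^ padicValNat 2 (p + 1) * 2 ^ padicValNat 2 (e + 1) := by
        rw [← pow_add, ← padicValNat_two_sum_range_pow_add_one hp.one_lt hpar.1 hpar.2,
          pow_succ, mul_comm]
    _ ≤ (p + 1) * (e + 1) := Nat.mul_le_mul h1 h2
    _ ≤ p ^ e := add_one_mul_add_one_le_pow hp3 he3

/-- Scaled form of `1 - ∑ 2 ^ (-t) ≤ ∏ (1 - 2 ^ (-t))`. -/
theorem two_pow_sum_le_prod_add_sum (u : Finset ℕ) :
    2 ^ (∑ t ∈ u, t) ≤ ∏ t ∈ u, (2 ^ t - 1) + ∑ t ∈ u, 2 ^ (∑ t ∈ u, t - t) := by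
  induction u using Finset.induction_on with
  | empty => simp
  | insert a u ha ih =>
    rw [sum_insert ha, prod_insert ha, sum_insert ha, add_tsub_cancel_left]
    set T := ∑ t ∈ u, t
    have hshift : ∑ t ∈ u, 2 ^ (a + T - t) = 2 ^ a * ∑ t ∈ u, 2 ^ (T - t) := by
      rw [mul_sum]
      refine sum_congr rfl fun t ht => ?_
      rw [← pow_add,
        Nat.add_sub_assoc (single_le_sum (f := fun t => t) (fun _ _ => Nat.zero_le _) ht)]
    rw [hshift, pow_add]
    obtain ⟨A, hA⟩ : ∃ A, 2 ^ a = A + 1 :=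
      ⟨2 ^ a - 1, (Nat.sub_add_cancel Nat.one_le_two_pow).symm⟩
    rw [hA, Nat.add_sub_cancel]
    generalize ∏ t ∈ u, (2 ^ t - 1) = P, ∑ t ∈ u, 2 ^ (T - t) = S at ih ⊢
    nlinarith [Nat.mul_le_mul_left A ih]

theorem two_mul_sum_two_pow_sub_lt {u : Finset ℕ} (hu : ∀ t ∈ u, 2 ≤ t) :
    2 * ∑ t ∈ u, 2 ^ (∑ t ∈ u, t - t) < 2 ^ (∑ t ∈ u, t) := by
  set T := ∑ t ∈ u, t
  have hle : ∀ t ∈ u, t ≤ T := fun t ht =>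
    single_le_sum (f := fun t => t) (fun _ _ => Nat.zero_le _) ht
  have hinj : Set.InjOn (fun t => T + 1 - t) u := fun x hx y hy hxy => by
    have := hle x hx
    have := hle y hy
    simp only at hxy
    omega
  calc 2 * ∑ t ∈ u, 2 ^ (T - t) = ∑ t ∈ u, 2 ^ (T + 1 - t) := by
        rw [mul_sum]
        refine sum_congr rfl fun t ht => ?_
        rw [← pow_succ', Nat.sub_add_comm (hle t ht)]
    _ = ∑ j ∈ u.image (fun t => T + 1 - t), 2 ^ j := (sum_image hinj).symm
    _ < 2 ^ T := Nat.geomSum_lt le_rfl fun j hj => by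
        obtain ⟨t, ht, rfl⟩ := mem_image.mp hj
        have := hu t ht; have := hle t ht
        omega

theorem two_pow_sum_lt_two_mul_prod {u : Finset ℕ} (hu : ∀ t ∈ u, 2 ≤ t) :
    2 ^ (∑ t ∈ u, t) < 2 * ∏ t ∈ u, (2 ^ t - 1) := by
  have := two_pow_sum_le_prod_add_sum u
  have := two_mul_sum_two_pow_sub_lt hu
  omega

theorem prod_add_one_lt_two_mul_prod {s : Finset ℕ} (hs : ∀ p ∈ s, IsMersennePrime p) :
    ∏ p ∈ s, (p + 1) < 2 * ∏ p ∈ s, p := by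
  have hinj : Set.InjOn (fun p => Nat.log 2 (p + 1)) s := fun p hp q hq hpq => by
    have hp' := (hs p hp).add_one_eq_two_pow_log
    have hq' := (hs q hq).add_one_eq_two_pow_log
    simp only at hpq
    rw [hpq] at hp'
    omega
  have hsucc : ∏ p ∈ s, (p + 1) = ∏ t ∈ s.image (fun p => Nat.log 2 (p + 1)), 2 ^ t := by
    rw [prod_image hinj]
    exact prod_congr rfl fun p hp => (hs p hp).add_one_eq_two_pow_log
  have hself : ∏ p ∈ s, p = ∏ t ∈ s.image (fun p => Nat.log 2 (p + 1)), (2 ^ t - 1) := by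
    rw [prod_image hinj]
    exact prod_congr rfl fun p hp => by have := (hs p hp).add_one_eq_two_pow_log; omega
  rw [hsucc, hself, prod_pow_eq_pow_sum]
  refine two_pow_sum_lt_two_mul_prod fun t ht => ?_
  obtain ⟨p, hp, rfl⟩ := mem_image.mp ht
  exact (hs p hp).two_le_log

theorem sigma_one_prod_of_prime {s : Finset ℕ} (hs : ∀ p ∈ s, p.Prime) :
    σ 1 (∏ p ∈ s, p) = ∏ p ∈ s, (p + 1) := by
  rw [isMultiplicative_sigma.map_prod_of_prime s hs]
  exact prod_congr rfl fun p hp => sigma_one_prime (hs p hp)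

theorem padicValNat_two_sigma_one_prod_eq_clog {s : Finset ℕ}
    (hs : ∀ p ∈ s, IsMersennePrime p) :
    padicValNat 2 (σ 1 (∏ p ∈ s, p)) = Nat.clog 2 (∏ p ∈ s, p) := by
  have hσ : σ 1 (∏ p ∈ s, p) = ∏ p ∈ s, (p + 1) :=
    sigma_one_prod_of_prime fun p hp => (hs p hp).1
  have hpow : ∏ p ∈ s, (p + 1) = 2 ^ ∑ p ∈ s, Nat.log 2 (p + 1) := by
    rw [← prod_pow_eq_pow_sum]
    exact prod_congr rfl fun p hp => (hs p hp).add_one_eq_two_pow_log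
  rw [hσ, hpow, padicValNat.prime_pow]
  refine (Nat.clog_eq_of_le_pow_of_pow_lt_mul one_lt_two ?_ ?_).symm <;> rw [← hpow]
  · exact prod_le_prod' fun p _ => p.le_succ
  · exact prod_add_one_lt_two_mul_prod hs

theorem two_pow_padicValNat_two_sigma_one {n : ℕ} (hn : n ≠ 0) :
    2 ^ padicValNat 2 (σ 1 n) =
      ∏ p ∈ n.primeFactors, 2 ^ padicValNat 2 (σ 1 (p ^ n.factorization p)) := by
  rw [IsMultiplicative.multiplicative_factorization _ isMultiplicative_sigma hn,
    Nat.prod_factorization_eq_prod_primeFactors, padicValNat_finset_prod, prod_pow_eq_pow_sum]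
  exact fun p hp =>
    (sigma_pos_iff.mpr (pow_pos (Nat.prime_of_mem_primeFactors hp).pos _)).ne'

theorem two_pow_padicValNat_two_sigma_one_lt {n : ℕ} (hn : n ≠ 0)
    (h : ∃ p ∈ n.primeFactors, ¬(n.factorization p = 1 ∧ IsMersennePrime p)) :
    2 ^ padicValNat 2 (σ 1 n) < n := by
  classical
  set good : ℕ → Prop := fun p => n.factorization p = 1 ∧ IsMersennePrime p
  rw [two_pow_padicValNat_two_sigma_one hn, ← prod_filter_mul_prod_filter_not _ good]
  conv_rhs => rw [Nat.prod_primeFactors_pow_factorization hn,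
    ← prod_filter_mul_prod_filter_not _ good]
  set w : ℕ → ℕ := fun p => 2 ^ padicValNat 2 (σ 1 (p ^ n.factorization p))
  have hgood_w : ∏ p ∈ n.primeFactors with good p, w p =
      ∏ p ∈ n.primeFactors with good p, (p + 1) :=
    prod_congr rfl fun p hp => by
      obtain ⟨he, hM⟩ := (mem_filter.mp hp).2
      simp only [w, he, pow_one, sigma_one_prime hM.1]
      rw [hM.add_one_eq_two_pow_log, padicValNat.prime_pow]
  have hgood_self : ∏ p ∈ n.primeFactors with good p, p ^ n.factorization p =
      ∏ p ∈ n.primeFactors with good p, p :=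
    prod_congr rfl fun p hp => by rw [(mem_filter.mp hp).2.1, pow_one]
  have hgood : ∏ p ∈ n.primeFactors with good p, (p + 1) <
      2 * ∏ p ∈ n.primeFactors with good p, p :=
    prod_add_one_lt_two_mul_prod fun p hp => (mem_filter.mp hp).2.2
  have hbad : 2 * ∏ p ∈ n.primeFactors with ¬good p, w p ≤
      ∏ p ∈ n.primeFactors with ¬good p, p ^ n.factorization p := by
    obtain ⟨p, hp, hpbad⟩ := h
    refine two_mul_prod_le_prod ⟨p, mem_filter.mpr ⟨hp, hpbad⟩⟩ fun q hq => ?_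
    obtain ⟨hq, hqbad⟩ := mem_filter.mp hq
    exact two_mul_two_pow_padicValNat_sigma_one_prime_pow_le
      (Nat.prime_of_mem_primeFactors hq)
      (Finsupp.mem_support_iff.mp (by rwa [Nat.support_factorization])) hqbad
  have hw : 0 < ∏ p ∈ n.primeFactors with ¬good p, w p := prod_pos fun _ _ => by positivity
  rw [hgood_w, hgood_self]
  generalize ∏ p ∈ n.primeFactors with good p, (p + 1) = a at *
  generalize ∏ p ∈ n.primeFactors with good p, p = b at *
  nlinarith

theorem val2_sigma_eq_iff_general (n : ℕ) :
    (padicValNat 2 (∑ d ∈ n.divisors, d) = Nat.clog 2 n ∧ 1 < n) ↔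
      ∃ s : Finset ℕ, s.Nonempty ∧ (∀ p ∈ s, Nat.Prime p ∧ ∃ t : ℕ, p + 1 = 2 ^ t) ∧
        n = ∏ p ∈ s, p := by
  rw [← sigma_one_apply]
  constructor
  · rintro ⟨hval, hn⟩
    have hfactors : ∀ p ∈ n.primeFactors, n.factorization p = 1 ∧ IsMersennePrime p := by
      by_contra h
      obtain ⟨p, hp, hbad⟩ := not_forall₂.mp h
      have := two_pow_padicValNat_two_sigma_one_lt (by omega) ⟨p, hp, hbad⟩
      have := Nat.le_pow_clog one_lt_two n
      rw [← hval] at this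
      omega
    refine ⟨n.primeFactors, Nat.nonempty_primeFactors.mpr hn,
      fun p hp => (hfactors p hp).2, ?_⟩
    conv_lhs => rw [Nat.prod_primeFactors_pow_factorization (by omega : n ≠ 0)]
    exact prod_congr rfl fun p hp => by rw [(hfactors p hp).1, pow_one]
  · rintro ⟨s, hs, hmer, rfl⟩
    obtain ⟨p, hp⟩ := hs
    exact ⟨padicValNat_two_sigma_one_prod_eq_clog hmer, (hmer p hp).1.one_lt.trans_le
      (single_le_prod' (fun q hq => (hmer q hq).1.one_lt.le) hp)⟩

theorem val2_sigma_eq_iff (n : ℕ) (hn : 0 < n) :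
    (padicValNat 2 (∑ d ∈ n.divisors, d) = Nat.clog 2 n ∧ 1 < n) ↔
      ∃ s : Finset ℕ, s.Nonempty ∧ (∀ p ∈ s, Nat.Prime p ∧ ∃ t : ℕ, p + 1 = 2 ^ t) ∧
        n = ∏ p ∈ s, p :=
  val2_sigma_eq_iff_general n
end

section
/- Let p be an odd prime and q ≠ p a prime, with q ≢ 1 (mod p). Suppose σ(q^k) = p^s for some s ≥ 1 and that p does not divide k+1. Then k+1 equals the multiplicative order of q modulo p. -/
/-!
Since `1 + q + ⋯ + q^k = p^s ≡ 0 (mod p)`, we get `q^(k+1) ≡ 1`, so the order `d` of `q` mod `p`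
divides `k + 1 = d * m`. The geometric sum factors as
`(1 + q + ⋯ + q^(d-1)) * (1 + q^d + ⋯ + q^(d(m-1)))`, and the second factor is `≡ m (mod p)`,
hence prime to `p`. Dividing `p^s`, it must be `1`, which forces `m = 1`.
-/

open Finset

theorem geom_sum_range_mul {R : Type*} [CommSemiring R] (x : R) (d m : ℕ) :
    ∑ i ∈ range (d * m), x ^ i = (∑ i ∈ range d, x ^ i) * ∑ j ∈ range m, (x ^ d) ^ j := by
  induction m with
  | zero => simp
  | succ m ih =>
    rw [Nat.mul_succ, sum_range_add, ih, sum_range_succ, mul_add]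
    congr 1
    rw [sum_mul]
    exact sum_congr rfl fun i _ => by rw [pow_add, pow_mul, mul_comm]

theorem pow_eq_one_of_geom_sum_eq_zero {R : Type*} [Ring R] {x : R} {n : ℕ}
    (h : ∑ i ∈ range n, x ^ i = 0) : x ^ n = 1 := by
  have := geom_sum_mul x n
  rwa [h, zero_mul, eq_comm, sub_eq_zero] at this

theorem Nat.eq_one_of_geom_sum_eq_one {a m : ℕ} (ha : 0 < a) (h : ∑ j ∈ range m, a ^ j = 1) :
    m = 1 := by
  have hm : m ≤ 1 :=
    calc m = ∑ _j ∈ range m, 1 := by simp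
      _ ≤ ∑ j ∈ range m, a ^ j := sum_le_sum fun j _ => Nat.one_le_pow j a ha
      _ = 1 := h
  rcases Nat.le_one_iff_eq_zero_or_eq_one.mp hm with rfl | rfl
  · simp at h
  · rfl

theorem eq_orderOf_of_geom_sum_eq_prime_pow {p q n s : ℕ} (hp : p.Prime) (hq : 0 < q)
    (hs : s ≠ 0) (h : ∑ i ∈ range n, q ^ i = p ^ s) (hn : ¬ p ∣ n) :
    n = orderOf (q : ZMod p) := by
  have hpow : (q : ZMod p) ^ n = 1 :=
    pow_eq_one_of_geom_sum_eq_zero (by simpa [hs] using congrArg (Nat.cast : ℕ → ZMod p) h)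
  set d := orderOf (q : ZMod p)
  obtain ⟨m, hm⟩ := orderOf_dvd_of_pow_eq_one hpow
  have hS_dvd : ∑ j ∈ range m, (q ^ d) ^ j ∣ p ^ s := by
    rw [← h, hm, geom_sum_range_mul]
    exact dvd_mul_left _ _
  have hS_cast : ((∑ j ∈ range m, (q ^ d) ^ j : ℕ) : ZMod p) = m := by
    simp [d, pow_orderOf_eq_one]
  have hS_not_dvd : ¬ p ∣ ∑ j ∈ range m, (q ^ d) ^ j := by
    rw [← ZMod.natCast_eq_zero_iff, hS_cast, ZMod.natCast_eq_zero_iff]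
    exact fun hpm => hn (hm ▸ hpm.mul_left d)
  have hS_one : ∑ j ∈ range m, (q ^ d) ^ j = 1 :=
    ((hp.coprime_iff_not_dvd.mpr hS_not_dvd).symm.pow_right s).eq_one_of_dvd hS_dvd
  rw [hm, Nat.eq_one_of_geom_sum_eq_one (pow_pos hq d) hS_one, mul_one]

theorem order_eq_of_sigma_prime_pow_general (p q k s : ℕ) (hp : Nat.Prime p)
    (hq : Nat.Prime q) (hs : 1 ≤ s)
    (hsig : (∑ d ∈ (q ^ k).divisors, d) = p ^ s) (hnd : ¬ p ∣ (k + 1)) :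
    k + 1 = orderOf (q : ZMod p) := by
  rw [Nat.sum_divisors_prime_pow hq] at hsig
  exact eq_orderOf_of_geom_sum_eq_prime_pow hp hq.pos (by omega) hsig hnd

theorem order_eq_of_sigma_prime_pow (p q k s : ℕ) (hp : Nat.Prime p) (hpodd : Odd p)
    (hq : Nat.Prime q) (hne : q ≠ p) (hcong : ¬ q ≡ 1 [MOD p]) (hs : 1 ≤ s)
    (hsig : (∑ d ∈ (q ^ k).divisors, d) = p ^ s) (hnd : ¬ p ∣ (k + 1)) :
    k + 1 = orderOf (q : ZMod p) :=
  order_eq_of_sigma_prime_pow_general p q k s hp hq hs hsig hnd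
end
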